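/- Let ρ be a density matrix on ℂ^d and let (ρ_n)_n, with ρ_n a density matrix on (ℂ^d)^⊗n, be weakly almost i.i.d. along ρ. Let M = {M_x}_{x∈X} be a POVM on ℂ^d with finite outcome set X, and set p(x) := Tr(ρ M_x). Let ℙ_n denote probability with respect to the distribution p_n on X^n given by p_n(x₁,…,x_n) := Tr[ρ_n (M_{x₁}⊗…⊗M_{x_n})], and for (X₁,…,X_n) ∼ p_n define the empirical frequencies p̂_n(x) := (1/n) Σ_{i=1}^n 1_{{X_i = x}} for x ∈ X. Then for every δ > 0, ℙ_n( max_{x∈X} |p̂_n(x) − p(x)| > δ ) → 0 as n → ∞. -/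

import Mathlib

open scoped BigOperators ComplexOrder
open Matrix Filter

noncomputable section

/-- Square matrices on `ℂ^d`. -/
abbrev Mat (d : ℕ) := Matrix (Fin d) (Fin d) ℂ

/-- Operators on the `n`-fold tensor power `(ℂ^d)^⊗n`, identified with matrices indexed by
`Fin n → Fin d`. -/
abbrev MatN (d n : ℕ) := Matrix (Fin n → Fin d) (Fin n → Fin d) ℂ

/-- A density matrix: positive semidefinite with unit trace. -/
def IsDensity {m : Type*} [Fintype m] [DecidableEq m] (ρ : Matrix m m ℂ) : Prop :=
  ρ.PosSemidef ∧ ρ.trace = 1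

/-- The square root of a positive semidefinite matrix, as `Matrix.PosSemidef.sqrt` was defined
in Mathlib of December 2024 (that definition has since been removed). -/
noncomputable def psdSqrtOld {m : Type*} [Fintype m] [DecidableEq m] {A : Matrix m m ℂ}
    (hA : A.PosSemidef) : Matrix m m ℂ :=
  (hA.1.eigenvectorUnitary : Matrix m m ℂ) *
    Matrix.diagonal ((↑) ∘ (fun x : ℝ => Real.sqrt x) ∘ hA.1.eigenvalues) *
    (star hA.1.eigenvectorUnitary : Matrix m m ℂ)

/-- The trace norm `‖X‖₁ = Tr √(XᴴX)`. -/
noncomputable def traceNorm {m : Type*} [Fintype m] [DecidableEq m] (X : Matrix m m ℂ) : ℝ :=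
  ((psdSqrtOld (Matrix.posSemidef_conjTranspose_mul_self X)).trace).re

/-- The `n`-fold tensor power `ρ^⊗n`. -/
def tpow {d : ℕ} (ρ : Mat d) (n : ℕ) : MatN d n := fun x y => ∏ i, ρ (x i) (y i)

/-- The tensor power of `ρ` over the sites in `I ⊆ [n]`. -/
def tpowOn {d n : ℕ} (ρ : Mat d) (I : Finset (Fin n)) :
    Matrix ((i : I) → Fin d) ((i : I) → Fin d) ℂ := fun x y => ∏ i, ρ (x i) (y i)

/-- Combine a configuration on `I` with a configuration on its complement. -/
def combine {α : Type*} {n : ℕ} (I : Finset (Fin n)) (x : (i : I) → α)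
    (c : (j : {j : Fin n // j ∉ I}) → α) : Fin n → α :=
  fun j => if h : j ∈ I then x ⟨j, h⟩ else c ⟨j, h⟩

/-- The marginal (partial trace over the sites outside `I`) of a state on `(ℂ^d)^⊗n`. -/
noncomputable def marginal {d n : ℕ} (ρn : MatN d n) (I : Finset (Fin n)) :
    Matrix ((i : I) → Fin d) ((i : I) → Fin d) ℂ :=
  fun x y => ∑ c : (j : {j : Fin n // j ∉ I}) → Fin d, ρn (combine I x c) (combine I y c)

/-- A sequence of states `ρ_n` on `(ℂ^d)^⊗n` is weakly almost i.i.d. along `ρ` if for each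
fixed `k ≥ 1` the average over all `k`-element subsets `I ⊆ [n]` of
`‖(ρ_n)_I − ρ^⊗k‖₁` tends to `0` as `n → ∞`. -/
def WeaklyAlmostIID {d : ℕ} (ρ : Mat d) (ρseq : ∀ n, MatN d n) : Prop :=
  ∀ k : ℕ, 0 < k →
    Tendsto (fun n : ℕ =>
        (∑ I ∈ Finset.powersetCard k (Finset.univ : Finset (Fin n)),
          traceNorm (marginal (ρseq n) I - tpowOn ρ I)) / (n.choose k : ℝ))
      atTop (nhds 0)

/-- `A^(i) = 1 ⊗ ⋯ ⊗ A ⊗ ⋯ ⊗ 1` with `A` in the `i`-th tensor factor. -/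
def embedAt {d : ℕ} (n : ℕ) (A : Mat d) (i : Fin n) : MatN d n :=
  fun x y => if ∀ j, j ≠ i → x j = y j then A (x i) (y i) else 0

/-- The empirical average `Ā_n = (1/n) Σ_i A^(i)`. -/
noncomputable def avgObs {d : ℕ} (n : ℕ) (A : Mat d) : MatN d n :=
  (n : ℂ)⁻¹ • ∑ i : Fin n, embedAt n A i

open Classical in
/-- The spectral projection of a Hermitian matrix `Q` onto the span of eigenvectors whose
eigenvalue satisfies the predicate `S` (junk value `0` if `Q` is not Hermitian). -/
noncomputable def specProj {m : Type*} [Fintype m] [DecidableEq m]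
    (S : ℝ → Prop) (Q : Matrix m m ℂ) : Matrix m m ℂ :=
  if hQ : Q.IsHermitian then
    (hQ.eigenvectorUnitary : Matrix m m ℂ) *
      Matrix.diagonal (fun i => if S (hQ.eigenvalues i) then (1 : ℂ) else 0) *
      star (hQ.eigenvectorUnitary : Matrix m m ℂ)
  else 0

open Classical in
/-- Functional calculus for a Hermitian matrix (junk value `0` if not Hermitian). -/
noncomputable def mfun {m : Type*} [Fintype m] [DecidableEq m]
    (f : ℝ → ℝ) (Q : Matrix m m ℂ) : Matrix m m ℂ :=
  if hQ : Q.IsHermitian then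
    (hQ.eigenvectorUnitary : Matrix m m ℂ) *
      Matrix.diagonal (fun i => (f (hQ.eigenvalues i) : ℂ)) *
      star (hQ.eigenvectorUnitary : Matrix m m ℂ)
  else 0

/-- The matrix logarithm (base 2) via functional calculus. -/
noncomputable def matLog {m : Type*} [Fintype m] [DecidableEq m] (Q : Matrix m m ℂ) :
    Matrix m m ℂ := mfun (Real.logb 2) Q

/-- The von Neumann entropy `S(ρ) = −Tr(ρ log ρ)` (base-2 logarithm, on the support). -/
noncomputable def vN {m : Type*} [Fintype m] [DecidableEq m] (ρ : Matrix m m ℂ) : ℝ :=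
  -(Matrix.trace (ρ * matLog ρ)).re

/-- The operator norm `‖A‖_∞`. -/
noncomputable def opNorm {m : Type*} [Fintype m] [DecidableEq m] (A : Matrix m m ℂ) : ℝ :=
  ‖Matrix.toEuclideanCLM (𝕜 := ℂ) A‖


/-- The tensor-product POVM element `M_{x₁} ⊗ ⋯ ⊗ M_{x_n}`. -/
def povmTensor {d : ℕ} {X : Type*} (M : X → Mat d) {n : ℕ} (xs : Fin n → X) : MatN d n :=
  fun a b => ∏ i, M (xs i) (a i) (b i)

end

/-!
Chebyshev's inequality and a union bound over `X` reduce the claim to the second moments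
`E[(p̂_n(x) - p(x))²]`. Expanding the square, these involve only the one- and two-site
statistics `P(X_i = x)` and `P(X_i = X_j = x)`, which are expectations of product effects in the
marginals `(ρ_n)_{i}` and `(ρ_n)_{i,j}`. Since `|Tr(H B)| ≤ ‖H‖₁` for `0 ≤ B ≤ 1`, they differ from
`p(x)` and `p(x)²` by at most the trace distance of these marginals to `ρ` and `ρ ⊗ ρ`. So the
second moment is at most `1/n` plus the averages of those trace distances over one- and
two-element subsets of `[n]`, which tend to `0` by the weak almost-i.i.d. hypothesis.
-/

open scoped MatrixOrder

section TraceInequalities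

variable {m : Type*} [Fintype m] [DecidableEq m]

lemma traceNorm_eq_re_trace_abs (A : Matrix m m ℂ) : traceNorm A = (CFC.abs A).trace.re := by
  have hA := posSemidef_conjTranspose_mul_self A
  have hsqrt : psdSqrtOld hA = CFC.abs A := by
    rw [CFC.abs, star_eq_conjTranspose, CFC.sqrt_eq_real_sqrt _ hA.nonneg, cfcₙ_eq_cfc, hA.1.cfc_eq,
      IsHermitian.cfc, Unitary.conjStarAlgAut_apply]
    rfl
  rw [traceNorm, hsqrt]

variable {𝕜 : Type*} [RCLike 𝕜]

lemma Matrix.PosSemidef.trace_mul_nonneg {A B : Matrix m m 𝕜} (hA : A.PosSemidef)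
    (hB : B.PosSemidef) : 0 ≤ (A * B).trace := by
  obtain ⟨C, rfl⟩ := CStarAlgebra.nonneg_iff_eq_star_mul_self.mp hA.nonneg
  rw [star_eq_conjTranspose, mul_assoc, trace_mul_comm, mul_assoc]
  simpa [mul_assoc] using (hB.mul_mul_conjTranspose_same C).trace_nonneg

lemma Matrix.PosSemidef.trace_mul_le_trace {A B : Matrix m m 𝕜} (hA : A.PosSemidef)
    (hB : (1 - B).PosSemidef) : (A * B).trace ≤ A.trace := by
  simpa [mul_sub, trace_sub] using hA.trace_mul_nonneg hB

omit [Fintype m] in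
lemma posSemidef_one_sub_sum_of_sum_eq_one {X : Type*} [Fintype X] [DecidableEq X]
    {A : X → Matrix m m 𝕜} (hA : ∀ x, (A x).PosSemidef) (hA1 : ∑ x, A x = 1) (t : Finset X) :
    (1 - ∑ x ∈ t, A x).PosSemidef := by
  rw [← hA1, ← Finset.sum_sdiff (Finset.subset_univ t), add_sub_cancel_right]
  exact posSemidef_sum _ fun x _ => hA x

lemma abs_re_trace_mul_le_traceNorm {H B : Matrix m m ℂ} (hH : H.IsHermitian)
    (hB : B.PosSemidef) (hB1 : (1 - B).PosSemidef) : |(H * B).trace.re| ≤ traceNorm H := by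
  have hpos : (H⁺).PosSemidef := (CFC.posPart_nonneg H).posSemidef
  have hneg : (H⁻).PosSemidef := (CFC.negPart_nonneg H).posSemidef
  have h₁ := (Complex.nonneg_iff.mp (hpos.trace_mul_nonneg hB)).1
  have h₂ := (Complex.le_def.mp (hpos.trace_mul_le_trace hB1)).1
  have h₃ := (Complex.nonneg_iff.mp (hneg.trace_mul_nonneg hB)).1
  have h₄ := (Complex.le_def.mp (hneg.trace_mul_le_trace hB1)).1
  have hsplit : (H * B).trace.re = (H⁺ * B).trace.re - (H⁻ * B).trace.re := by
    conv_lhs => rw [← CFC.posPart_sub_negPart H hH]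
    rw [sub_mul, trace_sub, Complex.sub_re]
  rw [hsplit, traceNorm_eq_re_trace_abs, ← CFC.posPart_add_negPart H hH, trace_add, Complex.add_re]
  exact abs_sub_le_iff.mpr ⟨by linarith, by linarith⟩

end TraceInequalities

section KroneckerPi

variable {ι m R : Type*} [Fintype ι]

def kroneckerPi [CommMonoid R] (A : ι → Matrix m m R) : Matrix (ι → m) (ι → m) R :=
  of fun a b => ∏ i, A i (a i) (b i)

@[simp]
lemma kroneckerPi_apply [CommMonoid R] (A : ι → Matrix m m R) (a b : ι → m) :
    kroneckerPi A a b = ∏ i, A i (a i) (b i) := rfl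

lemma kroneckerPi_conjTranspose [CommSemiring R] [StarRing R] (A : ι → Matrix m m R) :
    (kroneckerPi A)ᴴ = kroneckerPi (fun i => (A i)ᴴ) := by
  ext a b
  simp [star_prod]

lemma kroneckerPi_one [DecidableEq ι] [DecidableEq m] [CommSemiring R] :
    kroneckerPi (fun _ : ι => (1 : Matrix m m R)) = 1 := by
  ext a b
  simp only [kroneckerPi_apply, one_apply, Finset.prod_boole, Finset.mem_univ, forall_const,
    funext_iff]

lemma sum_piFinset_kroneckerPi [DecidableEq ι] [CommSemiring R] {X : Type*} [DecidableEq X]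
    (t : ι → Finset X) (A : ι → X → Matrix m m R) :
    ∑ f ∈ Fintype.piFinset t, kroneckerPi (fun i => A i (f i))
      = kroneckerPi (fun i => ∑ x ∈ t i, A i x) := by
  ext a b
  simp only [Matrix.sum_apply, kroneckerPi_apply, Finset.prod_univ_sum]

variable [Fintype m] [DecidableEq ι]

lemma kroneckerPi_mul [CommSemiring R] (A B : ι → Matrix m m R) :
    kroneckerPi A * kroneckerPi B = kroneckerPi (fun i => A i * B i) := by
  ext a b
  simp only [mul_apply, kroneckerPi_apply, ← Finset.prod_mul_distrib]
  exact (Fintype.prod_sum fun i s => A i (a i) s * B i s (b i)).symm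

lemma trace_kroneckerPi [CommSemiring R] (A : ι → Matrix m m R) :
    (kroneckerPi A).trace = ∏ i, (A i).trace :=
  (Fintype.prod_sum fun i s => A i s s).symm

variable [DecidableEq m] {𝕜 : Type*} [RCLike 𝕜]

lemma posSemidef_kroneckerPi {A : ι → Matrix m m 𝕜} (hA : ∀ i, (A i).PosSemidef) :
    (kroneckerPi A).PosSemidef := by
  choose B hB using fun i => CStarAlgebra.nonneg_iff_eq_star_mul_self.mp (hA i).nonneg
  rw [funext hB, ← kroneckerPi_mul]
  simp only [star_eq_conjTranspose, ← kroneckerPi_conjTranspose]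
  exact posSemidef_conjTranspose_mul_self _

lemma posSemidef_one_sub_kroneckerPi {A : ι → Matrix m m 𝕜}
    (hA : ∀ i, (A i).PosSemidef) (hA1 : ∀ i, (1 - A i).PosSemidef) :
    (1 - kroneckerPi A).PosSemidef := by
  -- On each factor `A i, 1 - A i` is a two-outcome POVM; the products of its outcomes sum to `1`.
  let E : ι → Bool → Matrix m m 𝕜 := fun i b => if b then A i else 1 - A i
  have hE : ∀ i b, (E i b).PosSemidef := fun i b => by cases b <;> simp [E, hA, hA1]
  have hsum : ∑ f : ι → Bool, kroneckerPi (fun i => E i (f i)) = 1 := by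
    rw [← Fintype.piFinset_univ, sum_piFinset_kroneckerPi]
    simp [E, kroneckerPi_one]
  have hA_eq : kroneckerPi A = kroneckerPi (fun i => E i true) := rfl
  rw [← hsum, hA_eq, ← Finset.sum_erase_eq_sub (Finset.mem_univ fun (_ : ι) => true)]
  exact Matrix.posSemidef_sum _ fun (f : ι → Bool) _ => posSemidef_kroneckerPi fun i => hE i (f i)

end KroneckerPi

section Marginal

variable {d n : ℕ}

lemma sum_eq_sum_combine {M : Type*} [AddCommMonoid M] (I : Finset (Fin n))
    (F : (Fin n → Fin d) → M) :
    ∑ a, F a = ∑ x : (i : I) → Fin d, ∑ c : (j : {j // j ∉ I}) → Fin d, F (combine I x c) := by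
  rw [← (Equiv.piEquivPiSubtypeProd (· ∈ I) fun _ => Fin d).symm.sum_comp F,
    Fintype.sum_prod_type]
  rfl

lemma kroneckerPi_combine {R : Type*} [CommMonoid R] (A : Fin n → Matrix (Fin d) (Fin d) R)
    (I : Finset (Fin n)) (x y : (i : I) → Fin d) (c c' : (j : {j // j ∉ I}) → Fin d) :
    kroneckerPi A (combine I x c) (combine I y c')
      = kroneckerPi (fun i : I => A i) x y * kroneckerPi (fun j : {j // j ∉ I} => A j) c c' := by
  simp only [kroneckerPi_apply]
  rw [← Fintype.prod_subtype_mul_prod_subtype (· ∈ I)]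
  congr 1
  · exact Finset.prod_congr (by ext; simp) fun i _ => by simp [combine]
  · exact Finset.prod_congr rfl fun j _ => by simp [combine, j.2]

lemma trace_mul_kroneckerPi_eq_trace_marginal (ρn : MatN d n) (I : Finset (Fin n))
    (A : Fin n → Mat d) (hA : ∀ j ∉ I, A j = 1) :
    (ρn * kroneckerPi A).trace = (marginal ρn I * kroneckerPi (fun i : I => A i)).trace := by
  have hAc : kroneckerPi (fun j : {j // j ∉ I} => A j) = 1 := by
    rw [show (fun j : {j // j ∉ I} => A j) = fun _ => 1 from funext fun j => hA j j.2,
      kroneckerPi_one]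
  simp only [trace, diag, mul_apply, marginal, Finset.sum_mul]
  rw [sum_eq_sum_combine (d := d) I]
  refine Finset.sum_congr rfl fun x _ => ?_
  conv_rhs => rw [Finset.sum_comm]
  refine Finset.sum_congr rfl fun c _ => ?_
  rw [sum_eq_sum_combine (d := d) I]
  refine Finset.sum_congr rfl fun y _ => ?_
  simp only [kroneckerPi_combine, hAc, one_apply, mul_ite, mul_one, mul_zero,
    Finset.sum_ite_eq', Finset.mem_univ, if_true]

end Marginal

section Measurement

variable {d n : ℕ}

lemma isHermitian_marginal {ρn : MatN d n} (hρn : ρn.IsHermitian) (I : Finset (Fin n)) :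
    (marginal ρn I).IsHermitian := by
  ext x y
  simp [marginal, star_sum, hρn.apply]

variable {X : Type*}

lemma povmTensor_eq_kroneckerPi (M : X → Mat d) (xs : Fin n → X) :
    povmTensor M xs = kroneckerPi (fun i => M (xs i)) := rfl

lemma re_trace_mul_povmTensor_nonneg {ρn : MatN d n} (hρn : ρn.PosSemidef) {M : X → Mat d}
    (hM : ∀ x, (M x).PosSemidef) (xs : Fin n → X) :
    0 ≤ (ρn * povmTensor M xs).trace.re :=
  (Complex.nonneg_iff.mp (hρn.trace_mul_nonneg (posSemidef_kroneckerPi fun i => hM (xs i)))).1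

variable [Fintype X] [DecidableEq X]

lemma sum_re_trace_mul_povmTensor {ρn : MatN d n} (hρn : ρn.trace = 1) {M : X → Mat d}
    (hM1 : ∑ x, M x = 1) : ∑ xs, (ρn * povmTensor M xs).trace.re = 1 := by
  simp only [povmTensor_eq_kroneckerPi]
  rw [← Complex.re_sum, ← trace_sum, ← Finset.mul_sum, ← Fintype.piFinset_univ,
    sum_piFinset_kroneckerPi]
  simp [hM1, kroneckerPi_one, hρn]

lemma abs_sum_piFinset_sub_prod_le_traceNorm {ρ : Mat d} (hρ : ρ.PosSemidef) {ρn : MatN d n}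
    (hρn : ρn.IsHermitian) {M : X → Mat d} (hM : ∀ x, (M x).PosSemidef) (hM1 : ∑ x, M x = 1)
    (s : Finset (Fin n)) (t : Fin n → Finset X) (ht : ∀ j ∉ s, t j = Finset.univ) :
    |∑ xs ∈ Fintype.piFinset t, (ρn * povmTensor M xs).trace.re
        - ∏ i ∈ s, ∑ x ∈ t i, (ρ * M x).trace.re|
      ≤ traceNorm (marginal ρn s - tpowOn ρ s) := by
  set E : Fin n → Mat d := fun j => ∑ x ∈ t j, M x
  have hE : ∀ j, (E j).PosSemidef := fun j => posSemidef_sum _ fun x _ => hM x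
  have hsum : ∑ xs ∈ Fintype.piFinset t, (ρn * povmTensor M xs).trace.re
      = (marginal ρn s * kroneckerPi (fun i : s => E i)).trace.re := by
    simp only [povmTensor_eq_kroneckerPi]
    rw [← Complex.re_sum, ← trace_sum, ← Finset.mul_sum, sum_piFinset_kroneckerPi,
      trace_mul_kroneckerPi_eq_trace_marginal ρn s]
    intro j hj
    simp [ht j hj, hM1]
  have hprod : ∏ i ∈ s, ∑ x ∈ t i, (ρ * M x).trace.re
      = (tpowOn ρ s * kroneckerPi (fun i : s => E i)).trace.re := by
    rw [show tpowOn ρ s = kroneckerPi (fun _ : s => ρ) from rfl, kroneckerPi_mul,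
      trace_kroneckerPi, ← Finset.prod_coe_sort s]
    have hreal : ∀ i : s, (ρ * E i).trace = (ρ * E i).trace.re :=
      fun i => Complex.eq_re_of_ofReal_le (by
        rw [Complex.ofReal_zero]; exact hρ.trace_mul_nonneg (hE i))
    rw [Finset.prod_congr rfl fun i _ => hreal i, ← Complex.ofReal_prod, Complex.ofReal_re]
    simp [E, Matrix.mul_sum, trace_sum, Complex.re_sum]
  rw [hsum, hprod, ← Complex.sub_re, ← trace_sub, ← sub_mul]
  refine abs_re_trace_mul_le_traceNorm ?_ (posSemidef_kroneckerPi fun i => hE i)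
    (posSemidef_one_sub_kroneckerPi (fun i => hE i)
      fun i => posSemidef_one_sub_sum_of_sum_eq_one hM hM1 _)
  exact (isHermitian_marginal hρn s).sub (posSemidef_kroneckerPi fun _ => hρ).isHermitian

end Measurement

section Combinatorics

variable {α : Type*}

lemma sum_powersetCard_one {M : Type*} [AddCommMonoid M] (u : Finset α) (e : Finset α → M) :
    ∑ I ∈ u.powersetCard 1, e I = ∑ i ∈ u, e {i} := by
  rw [Finset.powersetCard_one, Finset.sum_map]
  rfl

lemma sum_offDiag_pair [DecidableEq α] {M : Type*} [AddCommMonoid M] (u : Finset α)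
    (e : Finset α → M) :
    ∑ z ∈ u.offDiag, e {z.1, z.2} = 2 • ∑ I ∈ u.powersetCard 2, e I := by
  have hmaps : ∀ z ∈ u.offDiag, ({z.1, z.2} : Finset α) ∈ u.powersetCard 2 := by
    intro z hz
    obtain ⟨h1, h2, hne⟩ := Finset.mem_offDiag.mp hz
    exact Finset.mem_powersetCard.mpr ⟨Finset.insert_subset h1 (by simpa using h2),
      Finset.card_pair hne⟩
  rw [← Finset.sum_fiberwise_of_maps_to hmaps, Finset.smul_sum]
  refine Finset.sum_congr rfl fun I hI => ?_
  obtain ⟨hIu, hI2⟩ := Finset.mem_powersetCard.mp hI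
  have hfiber : u.offDiag.filter (fun z => ({z.1, z.2} : Finset α) = I) = I.offDiag := by
    ext z
    simp only [Finset.mem_filter, Finset.mem_offDiag]
    constructor
    · rintro ⟨⟨-, -, hne⟩, rfl⟩
      simp [hne]
    · rintro ⟨h1, h2, hne⟩
      refine ⟨⟨hIu h1, hIu h2, hne⟩, Finset.eq_of_subset_of_card_le ?_ ?_⟩
      · exact Finset.insert_subset h1 (by simpa using h2)
      · rw [hI2, Finset.card_pair hne]
  rw [Finset.sum_congr rfl fun z hz => congrArg e (Finset.mem_filter.mp hz).2, hfiber,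
    Finset.sum_const, Finset.offDiag_card, hI2]

end Combinatorics

section Averages

variable {n : ℕ}

noncomputable def subsetAverage (e : Finset (Fin n) → ℝ) (k : ℕ) : ℝ :=
  (∑ I ∈ Finset.powersetCard k Finset.univ, e I) / n.choose k

lemma subsetAverage_one (e : Finset (Fin n) → ℝ) :
    subsetAverage e 1 = (n : ℝ)⁻¹ * ∑ i, e {i} := by
  rw [subsetAverage, sum_powersetCard_one, Nat.choose_one_right, div_eq_inv_mul]

lemma two_mul_sum_powersetCard_two_le (e : Finset (Fin n) → ℝ) (he : ∀ I, 0 ≤ e I) :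
    (n : ℝ)⁻¹ ^ 2 * (2 * ∑ I ∈ Finset.powersetCard 2 Finset.univ, e I) ≤ subsetAverage e 2 := by
  set S := ∑ I ∈ Finset.powersetCard 2 (Finset.univ : Finset (Fin n)), e I
  have hS : 0 ≤ S := Finset.sum_nonneg fun I _ => he I
  rcases Nat.eq_zero_or_pos (n.choose 2) with h0 | hpos
  · have hempty : Finset.powersetCard 2 (Finset.univ : Finset (Fin n)) = ∅ := by
      rw [← Finset.card_eq_zero, Finset.card_powersetCard, Finset.card_univ, Fintype.card_fin, h0]
    simp [S, subsetAverage, hempty]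
  · have hn : (n : ℝ) ≠ 0 := by
      rintro hn
      simp_all
    have hchoose : (n.choose 2 : ℝ) ≤ (n : ℝ) ^ 2 / 2 := by
      rw [Nat.cast_choose_two]
      nlinarith [n.cast_nonneg (α := ℝ)]
    rw [subsetAverage, le_div_iff₀ (by exact_mod_cast hpos)]
    calc (n : ℝ)⁻¹ ^ 2 * (2 * S) * n.choose 2 ≤ (n : ℝ)⁻¹ ^ 2 * (2 * S) * ((n : ℝ) ^ 2 / 2) := by
          gcongr
      _ = S := by field_simp

lemma sum_offDiag_le_subsetAverage (e : Finset (Fin n) → ℝ) (he : ∀ I, 0 ≤ e I) :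
    (n : ℝ)⁻¹ ^ 2 * ∑ z ∈ (Finset.univ : Finset (Fin n)).offDiag, (e {z.1, z.2} + e {z.1} + e {z.2})
      ≤ subsetAverage e 2 + 2 * subsetAverage e 1 := by
  have hpairs := sum_offDiag_pair Finset.univ e
  have hsingles : ∑ z ∈ (Finset.univ : Finset (Fin n)).offDiag, (e {z.1} + e {z.2})
      ≤ 2 * n * ∑ i, e {i} := by
    calc _ ≤ ∑ z : Fin n × Fin n, (e {z.1} + e {z.2}) :=
          Finset.sum_le_sum_of_subset_of_nonneg (Finset.subset_univ _)
            fun z _ _ => add_nonneg (he _) (he _)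
      _ = 2 * n * ∑ i, e {i} := by
          simp [Fintype.sum_prod_type, Finset.sum_add_distrib, ← Finset.mul_sum]
          ring
  have hsplit : ∑ z ∈ (Finset.univ : Finset (Fin n)).offDiag, (e {z.1, z.2} + e {z.1} + e {z.2})
      = 2 * ∑ I ∈ Finset.powersetCard 2 Finset.univ, e I
        + ∑ z ∈ (Finset.univ : Finset (Fin n)).offDiag, (e {z.1} + e {z.2}) := by
    rw [two_mul, ← two_nsmul, ← hpairs, ← Finset.sum_add_distrib]
    simp only [add_assoc]
  have hn : (n : ℝ)⁻¹ ^ 2 * (2 * n * ∑ i, e {i}) = 2 * ((n : ℝ)⁻¹ * ∑ i, e {i}) := by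
    rcases Nat.eq_zero_or_pos n with rfl | hn
    · simp
    · field_simp
  rw [hsplit, mul_add, subsetAverage_one, ← hn]
  exact add_le_add (two_mul_sum_powersetCard_two_le e he)
    (mul_le_mul_of_nonneg_left hsingles (by positivity))

end Averages

section SecondMoment

lemma sum_mul_sub_mul_sub_le {Ω : Type*} [Fintype Ω] {P a b : Ω → ℝ} (hP1 : ∑ ω, P ω = 1)
    {p εa εb εab : ℝ} (hp0 : 0 ≤ p) (hp1 : p ≤ 1) (ha : |∑ ω, P ω * a ω - p| ≤ εa)
    (hb : |∑ ω, P ω * b ω - p| ≤ εb) (hab : |∑ ω, P ω * (a ω * b ω) - p ^ 2| ≤ εab) :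
    ∑ ω, P ω * ((a ω - p) * (b ω - p)) ≤ εab + εa + εb := by
  have hexpand : ∑ ω, P ω * ((a ω - p) * (b ω - p))
      = (∑ ω, P ω * (a ω * b ω) - p ^ 2) - p * (∑ ω, P ω * a ω - p)
        - p * (∑ ω, P ω * b ω - p) := by
    have hpt : ∀ ω, P ω * ((a ω - p) * (b ω - p))
        = P ω * (a ω * b ω) - p * (P ω * a ω) - p * (P ω * b ω) + p ^ 2 * P ω :=
      fun ω => by ring
    simp only [hpt, Finset.sum_add_distrib, Finset.sum_sub_distrib, ← Finset.mul_sum, hP1]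
    ring
  rw [hexpand]
  have ha' := abs_le.mp ha
  have hb' := abs_le.mp hb
  have hab' := abs_le.mp hab
  nlinarith

lemma sum_mul_sq_sum {Ω ι : Type*} [Fintype Ω] [Fintype ι] [DecidableEq ι] (P : Ω → ℝ)
    (Y : ι → Ω → ℝ) :
    ∑ ω, P ω * (∑ i, Y i ω) ^ 2
      = ∑ i, ∑ ω, P ω * (Y i ω * Y i ω)
        + ∑ z ∈ Finset.univ.offDiag, ∑ ω, P ω * (Y z.1 ω * Y z.2 ω) := by
  rw [← Finset.sum_diag (f := fun z : ι × ι => ∑ ω, P ω * (Y z.1 ω * Y z.2 ω)),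
    ← Finset.sum_union (Finset.disjoint_diag_offDiag _), Finset.diag_union_offDiag,
    Finset.univ_product_univ, Finset.sum_comm]
  refine Finset.sum_congr rfl fun ω _ => ?_
  rw [sq, Finset.sum_mul_sum, ← Finset.sum_product', Finset.univ_product_univ, Finset.mul_sum]

variable {n : ℕ} {X : Type*} [DecidableEq X]

noncomputable def empiricalFreq (xs : Fin n → X) (x : X) : ℝ :=
  (n : ℝ)⁻¹ * ∑ i, if xs i = x then 1 else 0

variable [Fintype X]

lemma sum_mul_sq_empiricalFreq_sub_le (hn : 0 < n) {P : (Fin n → X) → ℝ}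
    (hP0 : ∀ xs, 0 ≤ P xs) (hP1 : ∑ xs, P xs = 1) (x : X) {p : ℝ} (hp0 : 0 ≤ p) (hp1 : p ≤ 1)
    {e : Finset (Fin n) → ℝ}
    (he : ∀ s, |∑ xs with ∀ j ∈ s, xs j = x, P xs - p ^ s.card| ≤ e s) :
    ∑ xs, P xs * (empiricalFreq xs x - p) ^ 2
      ≤ (n : ℝ)⁻¹ + subsetAverage e 2 + 2 * subsetAverage e 1 := by
  set Y : Fin n → (Fin n → X) → ℝ := fun i xs => (if xs i = x then 1 else 0) - p
  have he0 : ∀ s, 0 ≤ e s := fun s => (abs_nonneg _).trans (he s)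
  have hmarg : ∀ s, |∑ xs, P xs * (∏ j ∈ s, if xs j = x then 1 else 0) - p ^ s.card| ≤ e s :=
    fun s => by simpa [Finset.sum_filter, Finset.prod_boole] using he s
  have hdiag : ∀ i, ∑ xs, P xs * (Y i xs * Y i xs) ≤ 1 := by
    intro i
    refine (Finset.sum_le_sum fun xs _ => mul_le_of_le_one_right (hP0 xs) ?_).trans hP1.le
    simp only [Y]
    split_ifs <;> nlinarith
  have hoff : ∀ i j, i ≠ j → ∑ xs, P xs * (Y i xs * Y j xs) ≤ e {i, j} + e {i} + e {j} := by
    intro i j hij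
    refine sum_mul_sub_mul_sub_le hP1 hp0 hp1 ?_ ?_ ?_
    · simpa using hmarg {i}
    · simpa using hmarg {j}
    · simpa [Finset.prod_pair hij, Finset.card_pair hij] using hmarg {i, j}
  have hexpand : ∑ xs, P xs * (empiricalFreq xs x - p) ^ 2
      = (n : ℝ)⁻¹ ^ 2 * ∑ xs, P xs * (∑ i, Y i xs) ^ 2 := by
    rw [Finset.mul_sum]
    refine Finset.sum_congr rfl fun xs _ => ?_
    have hY : empiricalFreq xs x - p = (n : ℝ)⁻¹ * ∑ i, Y i xs := by
      simp only [empiricalFreq, Y, Finset.sum_sub_distrib, Finset.sum_const, Finset.card_univ,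
        Fintype.card_fin, nsmul_eq_mul]
      field_simp
    rw [hY]
    ring
  calc ∑ xs, P xs * (empiricalFreq xs x - p) ^ 2
      ≤ (n : ℝ)⁻¹ ^ 2 * (n + ∑ z ∈ Finset.univ.offDiag, (e {z.1, z.2} + e {z.1} + e {z.2})) := by
        rw [hexpand, sum_mul_sq_sum]
        gcongr
        · simpa using Finset.sum_le_sum fun i (_ : i ∈ Finset.univ) => hdiag i
        · exact hoff _ _ (Finset.mem_offDiag.mp ‹_›).2.2
    _ = (n : ℝ)⁻¹ + (n : ℝ)⁻¹ ^ 2 * ∑ z ∈ Finset.univ.offDiag,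
          (e {z.1, z.2} + e {z.1} + e {z.2}) := by
        field_simp
    _ ≤ (n : ℝ)⁻¹ + subsetAverage e 2 + 2 * subsetAverage e 1 := by
        rw [add_assoc]
        gcongr
        exact sum_offDiag_le_subsetAverage e he0

end SecondMoment

lemma sum_filter_exists_lt_abs_le {Ω ι : Type*} [Fintype Ω] [Fintype ι] {P : Ω → ℝ}
    (hP : ∀ ω, 0 ≤ P ω) (f : Ω → ι → ℝ) {δ : ℝ} (hδ : 0 < δ)
    [DecidablePred fun ω => ∃ i, δ < |f ω i|] :
    ∑ ω with ∃ i, δ < |f ω i|, P ω ≤ (δ ^ 2)⁻¹ * ∑ i, ∑ ω, P ω * f ω i ^ 2 := by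
  rw [Finset.sum_comm, Finset.mul_sum]
  refine (Finset.sum_le_sum fun ω hω => ?_).trans
    (Finset.sum_le_sum_of_subset_of_nonneg (Finset.filter_subset _ _) fun ω _ _ => ?_)
  · obtain ⟨i, hi⟩ := (Finset.mem_filter.mp hω).2
    have hsq : δ ^ 2 ≤ f ω i ^ 2 := by
      rw [← sq_abs (f ω i)]
      exact pow_le_pow_left₀ hδ.le hi.le 2
    rw [le_inv_mul_iff₀ (by positivity)]
    calc δ ^ 2 * P ω ≤ P ω * f ω i ^ 2 := by rw [mul_comm]; gcongr; exact hP ω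
      _ ≤ ∑ i, P ω * f ω i ^ 2 :=
        Finset.single_le_sum (f := fun i => P ω * f ω i ^ 2)
          (fun j _ => mul_nonneg (hP ω) (sq_nonneg _)) (Finset.mem_univ i)
  · exact mul_nonneg (by positivity) (Finset.sum_nonneg fun i _ => mul_nonneg (hP ω) (sq_nonneg _))

section Deviation

variable {d n : ℕ} {X : Type*} [Fintype X] [DecidableEq X]

lemma piFinset_ite_singleton_univ (s : Finset (Fin n)) (x : X) :
    Fintype.piFinset (fun j => if j ∈ s then {x} else Finset.univ)
      = Finset.univ.filter fun xs : Fin n → X => ∀ j ∈ s, xs j = x := by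
  ext xs
  simp only [Fintype.mem_piFinset, Finset.mem_filter, Finset.mem_univ, true_and]
  refine forall_congr' fun j => ?_
  by_cases hj : j ∈ s <;> simp [hj]

lemma sum_filter_lt_abs_empiricalFreq_sub_le {ρ : Mat d} (hρ : IsDensity ρ) {ρn : MatN d n}
    (hρn : IsDensity ρn) {M : X → Mat d} (hM : ∀ x, (M x).PosSemidef) (hM1 : ∑ x, M x = 1)
    {δ : ℝ} (hδ : 0 < δ) (hn : 0 < n)
    [DecidablePred fun xs : Fin n → X => ∃ x, δ < |empiricalFreq xs x - (ρ * M x).trace.re|] :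
    ∑ xs with ∃ x, δ < |empiricalFreq xs x - (ρ * M x).trace.re|, (ρn * povmTensor M xs).trace.re
      ≤ (δ ^ 2)⁻¹ * (Fintype.card X * ((n : ℝ)⁻¹
          + subsetAverage (fun I => traceNorm (marginal ρn I - tpowOn ρ I)) 2
          + 2 * subsetAverage (fun I => traceNorm (marginal ρn I - tpowOn ρ I)) 1)) := by
  refine (sum_filter_exists_lt_abs_le (re_trace_mul_povmTensor_nonneg hρn.1 hM) _ hδ).trans ?_
  gcongr
  rw [← nsmul_eq_mul, ← Finset.card_univ, ← Finset.sum_const]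
  refine Finset.sum_le_sum fun x _ => sum_mul_sq_empiricalFreq_sub_le hn
    (re_trace_mul_povmTensor_nonneg hρn.1 hM) (sum_re_trace_mul_povmTensor hρn.2 hM1) x
    (Complex.nonneg_iff.mp (hρ.1.trace_mul_nonneg (hM x))).1 ?_ fun s => ?_
  · simpa [hρ.2] using (Complex.le_def.mp
      (hρ.1.trace_mul_le_trace (posSemidef_one_sub_sum_of_sum_eq_one hM hM1 {x}))).1
  · have := abs_sum_piFinset_sub_prod_le_traceNorm hρ.1 hρn.1.isHermitian hM hM1 s
      (fun j => if j ∈ s then {x} else Finset.univ) fun j hj => if_neg hj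
    rw [piFinset_ite_singleton_univ] at this
    convert this using 3
    rw [Finset.prod_congr rfl fun i hi => by rw [if_pos hi, Finset.sum_singleton],
      Finset.prod_const]

end Deviation

open scoped Classical in
theorem stmt_13 {d : ℕ} {X : Type*} [Fintype X] [DecidableEq X]
    (ρ : Mat d) (hρ : IsDensity ρ)
    (ρseq : ∀ n, MatN d n) (hdens : ∀ n, IsDensity (ρseq n))
    (hwaiid : WeaklyAlmostIID ρ ρseq)
    (M : X → Mat d) (hM : ∀ x, (M x).PosSemidef) (hM1 : ∑ x, M x = 1)
    (δ : ℝ) (hδ : 0 < δ) :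
    Tendsto (fun n : ℕ =>
        ∑ xs ∈ Finset.univ.filter (fun xs : Fin n → X =>
            ∃ x : X, δ < |(n : ℝ)⁻¹ * ∑ i, (if xs i = x then (1 : ℝ) else 0) -
              (Matrix.trace (ρ * M x)).re|),
          (Matrix.trace (ρseq n * povmTensor M xs)).re)
      atTop (nhds 0) := by
  have havg : ∀ k, 0 < k → Tendsto (fun n : ℕ =>
      subsetAverage (fun I => traceNorm (marginal (ρseq n) I - tpowOn ρ I)) k) atTop (nhds 0) :=
    hwaiid
  have hbound : Tendsto (fun n : ℕ => (δ ^ 2)⁻¹ * (Fintype.card X * ((n : ℝ)⁻¹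
      + subsetAverage (fun I => traceNorm (marginal (ρseq n) I - tpowOn ρ I)) 2
      + 2 * subsetAverage (fun I => traceNorm (marginal (ρseq n) I - tpowOn ρ I)) 1)))
      atTop (nhds 0) := by
    simpa using (((tendsto_inv_atTop_nhds_zero_nat.add (havg 2 two_pos)).add
      ((havg 1 one_pos).const_mul 2)).const_mul (Fintype.card X : ℝ)).const_mul (δ ^ 2)⁻¹
  refine tendsto_of_tendsto_of_tendsto_of_le_of_le' tendsto_const_nhds hbound
    (Eventually.of_forall fun n => Finset.sum_nonneg fun xs _ =>
      re_trace_mul_povmTensor_nonneg (hdens n).1 hM xs)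
    (eventually_atTop.mpr ⟨1, fun n hn =>
      sum_filter_lt_abs_empiricalFreq_sub_le hρ (hdens n) hM hM1 hδ hn⟩)
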